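/- Let h > 0, γ > 0 and g₀ > 0, and let (θ_k, ψ_k) be a sequence in ℝ² satisfying the WGAN-GP simultaneous gradient descent update θ_{k+1} = θ_k − hψ_k and ψ_{k+1} = ψ_k + h(θ_k − sign(ψ_k)·γ·(|ψ_k| − g₀)) with ψ_k ≠ 0 for all k ∈ ℕ. Then (θ_k, ψ_k) does not converge to (0, 0). (Indeed, if it converged to (0, 0), then |ψ_{k+1} − ψ_k| would converge to h·γ·g₀ > 0, contradicting that (ψ_k) is a Cauchy sequence.) -/
import Mathlib


/-- WGAN-GP on the Dirac-GAN, trained with simultaneous gradient descent with fixed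
learning rate `h > 0`, does not converge to the Nash equilibrium `(0,0)`: any sequence
following the update `θ_{k+1} = θ_k − hψ_k`,
`ψ_{k+1} = ψ_k + h(θ_k − sign(ψ_k)·γ·(|ψ_k| − g₀))` with `ψ_k ≠ 0` for all `k` does not
converge to `(0, 0)`. -/
theorem wgan_gp_dirac_gan_not_convergent
    (h γ g₀ : ℝ) (hh : 0 < h) (hγ : 0 < γ) (hg₀ : 0 < g₀)
    (θ ψ : ℕ → ℝ) (hψ : ∀ k : ℕ, ψ k ≠ 0)
    (hrec : ∀ k : ℕ,
      θ (k + 1) = θ k - h * ψ k ∧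
      ψ (k + 1) = ψ k + h * (θ k - Real.sign (ψ k) * (γ * (|ψ k| - g₀)))) :
    ¬ Filter.Tendsto (fun k => (θ k, ψ k)) Filter.atTop (nhds ((0 : ℝ), (0 : ℝ))) := by
  intro H
  have hθ : Filter.Tendsto θ Filter.atTop (nhds 0) :=
    (continuous_fst.tendsto _).comp H
  have hψ0 : Filter.Tendsto ψ Filter.atTop (nhds 0) :=
    (continuous_snd.tendsto _).comp H
  have hψ1 : Filter.Tendsto (fun k => ψ (k + 1)) Filter.atTop (nhds 0) :=
    hψ0.comp (Filter.tendsto_add_atTop_nat 1)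
  have hdiff : Filter.Tendsto (fun k => ψ (k + 1) - ψ k) Filter.atTop (nhds 0) := by
    simpa using hψ1.sub hψ0
  have hε : 0 < h * (γ * g₀) / 4 := by positivity
  have hε2 : 0 < γ * g₀ / 4 := by positivity
  have hε3 : 0 < g₀ / 2 := by positivity
  have e1 := hθ.eventually (Metric.ball_mem_nhds (0 : ℝ) hε2)
  have e2 := hψ0.eventually (Metric.ball_mem_nhds (0 : ℝ) hε3)
  have e3 := hdiff.eventually (Metric.ball_mem_nhds (0 : ℝ) hε)
  obtain ⟨k, h1, h2, h3⟩ := (e1.and (e2.and e3)).exists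
  simp only [Metric.mem_ball, Real.dist_eq, sub_zero] at h1 h2 h3
  have hsign : |Real.sign (ψ k)| = 1 := by
    rcases lt_or_gt_of_ne (hψ k) with hk | hk
    · rw [Real.sign_of_neg hk]; norm_num
    · rw [Real.sign_of_pos hk]; norm_num
  have key : ψ (k + 1) - ψ k = h * (θ k - Real.sign (ψ k) * (γ * (|ψ k| - g₀))) := by
    rw [(hrec k).2]; ring
  have habs : |ψ (k + 1) - ψ k| = h * |θ k - Real.sign (ψ k) * (γ * (|ψ k| - g₀))| := by
    rw [key, abs_mul, abs_of_pos hh]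
  have hXabs : |Real.sign (ψ k) * (γ * (|ψ k| - g₀))| = γ * (g₀ - |ψ k|) := by
    rw [abs_mul, hsign, one_mul, abs_mul, abs_of_pos hγ, abs_of_neg (by linarith)]
    ring
  have hlow : γ * g₀ / 4 ≤ |θ k - Real.sign (ψ k) * (γ * (|ψ k| - g₀))| := by
    have := abs_sub_abs_le_abs_sub (Real.sign (ψ k) * (γ * (|ψ k| - g₀))) (θ k)
    rw [hXabs] at this
    rw [abs_sub_comm]
    have hψk : |ψ k| ≤ g₀ / 2 := le_of_lt h2
    nlinarith [abs_nonneg (θ k)]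
  have : h * (γ * g₀ / 4) ≤ |ψ (k + 1) - ψ k| := by
    rw [habs]
    exact mul_le_mul_of_nonneg_left hlow hh.le
  have : h * (γ * g₀) / 4 ≤ |ψ (k + 1) - ψ k| := by linarith
  linarith
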